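/- arXiv:1708.03282 — 5 statements merged into one kernel-verified Lean document; each statement's English description precedes it below -/
import Mathlib

section
/- Let p(x) = a_{i_1}x^{i_1} + a_{i_2}x^{i_2} + ... + a_{i_r}x^{i_r} be a real polynomial with 0 = i_1 < i_2 < ... < i_r and all coefficients a_{i_j} nonzero. If m is the number of indices j in {1, ..., r-1} with a_{i_j} a_{i_{j+1}} < 0 (the number of variations of sign), then p has at most m distinct positive real roots. -/
/-!
Mathlib's Descartes rule `Polynomial.roots_countP_pos_le_signVariations` bounds the positive roots,
with multiplicity, by the sign changes of the coefficient list with zeros skipped. For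
`∑ a_j X^(i_j)` with strictly increasing `i_j` and nonzero `a_j` those are exactly the `j` with
`a_j a_(j+1) < 0`: erasing the leading monomial `a_(r-1) X^(i_(r-1))` removes one change precisely
when `a_(r-2) a_(r-1) < 0`.
-/

open Finset Polynomial

namespace Polynomial

section Semiring

variable {R : Type*} [Semiring R] (i : ℕ → ℕ) (a : ℕ → R) {r : ℕ}

theorem degree_sum_range_monomial_lt (hi : ∀ j < r, i j < i r) :
    (∑ j ∈ range r, monomial (i j) (a j)).degree < i r := by
  refine (degree_sum_le _ _).trans_lt ((Finset.sup_lt_iff (WithBot.bot_lt_coe _)).2 fun j hj => ?_)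
  exact (degree_monomial_le _ _).trans_lt (WithBot.coe_lt_coe.2 (hi j (mem_range.1 hj)))

variable {i a}

theorem leadingCoeff_sum_range_succ_monomial (hi : ∀ j < r, i j < i r) (ha : a r ≠ 0) :
    (∑ j ∈ range (r + 1), monomial (i j) (a j)).leadingCoeff = a r := by
  rw [sum_range_succ, leadingCoeff_add_of_degree_lt, leadingCoeff_monomial]
  rw [degree_monomial _ ha]
  exact degree_sum_range_monomial_lt i a hi

theorem sum_range_succ_monomial_ne_zero (hi : ∀ j < r, i j < i r) (ha : a r ≠ 0) :
    ∑ j ∈ range (r + 1), monomial (i j) (a j) ≠ 0 := by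
  rw [← leadingCoeff_ne_zero, leadingCoeff_sum_range_succ_monomial hi ha]
  exact ha

theorem eraseLead_sum_range_succ_monomial (hi : ∀ j < r, i j < i r) (ha : a r ≠ 0) :
    (∑ j ∈ range (r + 1), monomial (i j) (a j)).eraseLead =
      ∑ j ∈ range r, monomial (i j) (a j) := by
  rw [sum_range_succ, eraseLead_add_of_degree_lt_right, eraseLead_monomial, add_zero]
  rw [degree_monomial _ ha]
  exact degree_sum_range_monomial_lt i a hi

end Semiring

variable {R : Type*} [CommRing R] [LinearOrder R] [IsStrictOrderedRing R]

theorem sign_eq_neg_sign_iff_mul_neg {x y : R} (hy : y ≠ 0) :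
    SignType.sign x = -SignType.sign y ↔ x * y < 0 := by
  rw [← sign_eq_neg_one_iff, sign_mul]
  rcases lt_or_gt_of_ne hy with h | h
  · rw [sign_neg h]; rcases SignType.sign x <;> decide
  · rw [sign_pos h]; rcases SignType.sign x <;> decide

theorem signVariations_sum_range_monomial {i : ℕ → ℕ} {a : ℕ → R} {r : ℕ}
    (hi : ∀ j k, j < k → k < r → i j < i k) (ha : ∀ j < r, a j ≠ 0) :
    (∑ j ∈ range r, monomial (i j) (a j)).signVariations =
      #{j ∈ range (r - 1) | a j * a (j + 1) < 0} := by
  induction r with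
  | zero => simp
  | succ r ih =>
    rcases r with _ | r
    · simp
    have hi' : ∀ j < r + 1, i j < i (r + 1) := fun j hj => hi j _ hj (by omega)
    have ha' : a (r + 1) ≠ 0 := ha _ (by omega)
    rw [signVariations_eq_eraseLead_add_ite (sum_range_succ_monomial_ne_zero hi' ha'),
      eraseLead_sum_range_succ_monomial hi' ha', leadingCoeff_sum_range_succ_monomial hi' ha',
      leadingCoeff_sum_range_succ_monomial (fun j hj => hi j r hj (by omega)) (ha _ (by omega)),
      ih (fun j k hjk hk => hi j k hjk (by omega)) (fun j hj => ha j (by omega))]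
    simp only [sign_eq_neg_sign_iff_mul_neg (ha r (by omega)), mul_comm (a (r + 1)),
      Nat.add_sub_cancel, range_add_one, filter_insert]
    split_ifs <;> simp

theorem card_le_roots_countP_pos {P : R[X]} (hP : P ≠ 0) {S : Finset R}
    (hS : ∀ x ∈ S, 0 < x ∧ P.eval x = 0) : S.card ≤ P.roots.countP (0 < ·) := by
  rw [Multiset.countP_eq_card_filter]
  refine (card_le_card fun x hx => ?_).trans (Multiset.toFinset_card_le _)
  obtain ⟨hx0, hPx⟩ := hS x hx
  simpa [hP, hx0] using hPx

end Polynomial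

theorem descartes_rule_of_signs_upper_bound_general
    (r : ℕ) (hr : 0 < r) (i : ℕ → ℕ) (a : ℕ → ℝ)
    (hmono : ∀ j k : ℕ, j < k → k < r → i j < i k)
    (ha : ∀ j : ℕ, j < r → a j ≠ 0)
    (m : ℕ)
    (hm : m = ((Finset.range (r - 1)).filter (fun j => a j * a (j + 1) < 0)).card)
    (p : ℝ → ℝ)
    (hp : ∀ x : ℝ, p x = ∑ j ∈ Finset.range r, a j * x ^ (i j)) :
    ∀ S : Finset ℝ, (∀ x ∈ S, 0 < x ∧ p x = 0) → S.card ≤ m := by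
  intro S hS
  set P : ℝ[X] := ∑ j ∈ range r, monomial (i j) (a j)
  have hPp : ∀ x, P.eval x = p x := by simp [P, hp, eval_finsetSum]
  have hP : P ≠ 0 := by
    obtain ⟨n, rfl⟩ := Nat.exists_eq_add_one.2 hr
    exact sum_range_succ_monomial_ne_zero (fun j hj => hmono j n hj n.lt_add_one)
      (ha n n.lt_add_one)
  calc S.card ≤ P.roots.countP (0 < ·) := card_le_roots_countP_pos hP (by simpa [hPp] using hS)
    _ ≤ P.signVariations := roots_countP_pos_le_signVariations P
    _ = m := by rw [hm, signVariations_sum_range_monomial hmono ha]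

/-- Descartes' rule of signs (first part): a real polynomial
`p(x) = a_{i_1} x^{i_1} + ⋯ + a_{i_r} x^{i_r}` with `0 = i_1 < i_2 < ⋯ < i_r`
and all coefficients nonzero has at most `m` distinct positive real roots,
where `m` is the number of sign variations of the coefficient sequence. -/
theorem descartes_rule_of_signs_upper_bound
    (r : ℕ) (hr : 0 < r) (i : ℕ → ℕ) (a : ℕ → ℝ)
    (hi0 : i 0 = 0)
    (hmono : ∀ j k : ℕ, j < k → k < r → i j < i k)
    (ha : ∀ j : ℕ, j < r → a j ≠ 0)
    (m : ℕ)
    (hm : m = ((Finset.range (r - 1)).filter (fun j => a j * a (j + 1) < 0)).card)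
    (p : ℝ → ℝ)
    (hp : ∀ x : ℝ, p x = ∑ j ∈ Finset.range r, a j * x ^ (i j)) :
    ∀ S : Finset ℝ, (∀ x ∈ S, 0 < x ∧ p x = 0) → S.card ≤ m :=
  descartes_rule_of_signs_upper_bound_general r hr i a hmono ha m hm p hp
end

section
/- For every finite set of exponents 0 = i_1 < i_2 < ... < i_r of natural numbers, there exist nonzero real coefficients a_{i_1}, ..., a_{i_r} such that the polynomial p(x) = a_{i_1}x^{i_1} + a_{i_2}x^{i_2} + ... + a_{i_r}x^{i_r} has exactly r - 1 distinct positive real roots. -/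
/-!
Fix any `r - 1` positive reals. Vanishing at them imposes `r - 1` linear conditions on the `r`
coefficients, so some nonzero choice of coefficients satisfies them all. By Descartes' rule of
signs a nonzero sum of monomials has fewer positive roots than nonzero terms; having `r - 1`
positive roots, it must therefore have all `r` coefficients nonzero, and no further positive roots.
-/

open Finset

namespace Polynomial

section Semiring

variable {R ι : Type*} [Semiring R]

theorem signVariations_le_card_support_sub_one [LinearOrder R] (P : R[X]) :
    P.signVariations ≤ #P.support - 1 := by
  induction hn : #P.support generalizing P with
  | zero => simp [card_support_eq_zero.1 hn]
  | succ n ih =>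
    by_cases hP : P.eraseLead = 0
    · rw [← P.eraseLead_add_monomial_natDegree_leadingCoeff, hP, zero_add,
        signVariations_monomial]
      exact Nat.zero_le _
    · have hn' : #P.eraseLead.support = n := by rw [card_support_eraseLead, hn]; rfl
      have hpos : n ≠ 0 := hn' ▸ mt card_support_eq_zero.1 hP
      have := (P.signVariations_le_eraseLead_succ).trans (Nat.add_le_add_right (ih _ hn') 1)
      omega

theorem card_support_sum_monomial_le [DecidableEq R] (s : Finset ι) (e : ι → ℕ) (a : ι → R) :
    #(∑ j ∈ s, monomial (e j) (a j)).support ≤ #{j ∈ s | a j ≠ 0} := by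
  refine (card_le_card fun n hn => ?_).trans (card_image_le (f := e))
  rw [mem_support_iff, finsetSum_coeff] at hn
  obtain ⟨j, hj, hjn⟩ := exists_ne_zero_of_sum_ne_zero hn
  rw [coeff_monomial, ite_ne_right_iff] at hjn
  obtain ⟨rfl, hjn⟩ := hjn
  exact mem_image.2 ⟨j, mem_filter.2 ⟨hj, hjn⟩, rfl⟩

theorem coeff_sum_monomial_of_injOn {s : Finset ι} {e : ι → ℕ} (he : Set.InjOn e s)
    (a : ι → R) {j : ι} (hj : j ∈ s) :
    (∑ k ∈ s, monomial (e k) (a k)).coeff (e j) = a j := by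
  rw [finsetSum_coeff, sum_eq_single_of_mem j hj fun k hk hkj => ?_, coeff_monomial, if_pos rfl]
  rw [coeff_monomial, if_neg fun h => hkj (he hk hj h)]

end Semiring

variable {R : Type*} [CommRing R] [LinearOrder R] [IsStrictOrderedRing R]

theorem card_pos_roots_lt_card_support {P : R[X]} (hP : P ≠ 0) :
    #{x ∈ P.roots.toFinset | 0 < x} < #P.support := by
  have hroots : #{x ∈ P.roots.toFinset | 0 < x} ≤ P.roots.countP (0 < ·) := by
    rw [Multiset.countP_eq_card_filter, ← Multiset.toFinset_filter]
    exact Multiset.toFinset_card_le _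
  have hsupport : 0 < #P.support := card_pos.2 (support_nonempty.2 hP)
  have := P.roots_countP_pos_le_signVariations.trans P.signVariations_le_card_support_sub_one
  omega

end Polynomial

open Polynomial

theorem exists_finset_pos_roots_sum_mul_pow {R ι : Type*} [CommRing R] [LinearOrder R]
    [IsStrictOrderedRing R] {s : Finset ι} {e : ι → ℕ} (he : Set.InjOn e s) {a : ι → R}
    (ha : ∃ j ∈ s, a j ≠ 0) :
    ∃ S : Finset R, #S < #{j ∈ s | a j ≠ 0} ∧
      ∀ x, x ∈ S ↔ 0 < x ∧ ∑ j ∈ s, a j * x ^ e j = 0 := by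
  set P : R[X] := ∑ j ∈ s, monomial (e j) (a j)
  have hP : P ≠ 0 := by
    obtain ⟨j, hj, haj⟩ := ha
    rw [← coeff_sum_monomial_of_injOn he a hj] at haj
    exact fun h0 => haj ((congrArg (coeff · (e j)) h0).trans (coeff_zero _))
  refine ⟨{x ∈ P.roots.toFinset | 0 < x},
    (card_pos_roots_lt_card_support hP).trans_le (card_support_sum_monomial_le s e a), fun x => ?_⟩
  simp [P, mem_roots hP, eval_finsetSum, and_comm]

theorem exists_ne_zero_forall_sum_mul_pow_eq_zero {K ι : Type*} [Field K] (s : Finset ι)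
    (e : ι → ℕ) (T : Finset K) (hT : #T < #s) :
    ∃ a : ι → K, (∃ j ∈ s, a j ≠ 0) ∧ ∀ x ∈ T, ∑ j ∈ s, a j * x ^ e j = 0 := by
  classical
  let L : (s → K) →ₗ[K] (T → K) :=
    { toFun := fun a x => ∑ j : s, a j * (x : K) ^ e j
      map_add' := fun a b => by ext; simp [add_mul, sum_add_distrib]
      map_smul' := fun c a => by ext; simp [mul_sum, mul_assoc] }
  have hker : LinearMap.ker L ≠ ⊥ := LinearMap.ker_ne_bot_of_finrank_lt (by simpa using hT)
  obtain ⟨a, ha, ha0⟩ := (Submodule.ne_bot_iff _).1 hker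
  refine ⟨fun j => if hj : j ∈ s then a ⟨j, hj⟩ else 0, ?_, fun x hx => ?_⟩
  · obtain ⟨⟨j, hj⟩, hja⟩ := Function.ne_iff.1 ha0
    exact ⟨j, hj, by simpa [hj] using hja⟩
  · have := congrFun (LinearMap.mem_ker.1 ha) ⟨x, hx⟩
    rw [← sum_coe_sort s]
    simpa [L] using this

theorem descartes_rule_of_signs_sharp_general
    (r : ℕ) (hr : 0 < r) (i : ℕ → ℕ)
    (hmono : ∀ j k : ℕ, j < k → k < r → i j < i k) :
    ∃ a : ℕ → ℝ, (∀ j : ℕ, j < r → a j ≠ 0) ∧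
      ∃ S : Finset ℝ, S.card = r - 1 ∧
        ∀ x : ℝ, x ∈ S ↔ (0 < x ∧ ∑ j ∈ Finset.range r, a j * x ^ (i j) = 0) := by
  have hinj : Set.InjOn i (range r) :=
    StrictMonoOn.injOn fun j _ k hk hjk => hmono j k hjk (mem_range.1 hk)
  obtain ⟨T, hTpos, hTcard⟩ := (Set.Ioi_infinite (0 : ℝ)).exists_subset_card_eq (r - 1)
  obtain ⟨a, ha, haT⟩ :=
    exists_ne_zero_forall_sum_mul_pow_eq_zero (range r) i T (by rw [hTcard, card_range]; omega)
  obtain ⟨S, hS, hmem⟩ := exists_finset_pos_roots_sum_mul_pow hinj ha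
  have hTS : #T ≤ #S := card_le_card fun x hx => (hmem x).2 ⟨hTpos hx, haT x hx⟩
  have hfilter : #{j ∈ range r | a j ≠ 0} = r :=
    le_antisymm ((card_filter_le _ _).trans_eq (card_range r)) (by omega)
  refine ⟨a, fun j hj => card_filter_eq_iff.1 (hfilter.trans (card_range r).symm) j
    (mem_range.2 hj), S, by omega, hmem⟩

/-- Descartes' rule of signs (second part): for any prescribed exponents
`0 = i_1 < i_2 < ⋯ < i_r` one can choose nonzero real coefficients so that
`p(x) = a_{i_1} x^{i_1} + ⋯ + a_{i_r} x^{i_r}` has exactly `r - 1` distinct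
positive real roots. -/
theorem descartes_rule_of_signs_sharp
    (r : ℕ) (hr : 0 < r) (i : ℕ → ℕ)
    (hi0 : i 0 = 0)
    (hmono : ∀ j k : ℕ, j < k → k < r → i j < i k) :
    ∃ a : ℕ → ℝ, (∀ j : ℕ, j < r → a j ≠ 0) ∧
      ∃ S : Finset ℝ, S.card = r - 1 ∧
        ∀ x : ℝ, x ∈ S ↔ (0 < x ∧ ∑ j ∈ Finset.range r, a j * x ^ (i j) = 0) :=
  descartes_rule_of_signs_sharp_general r hr i hmono
end

section
/- Let a_0, ..., a_9, b_0, ..., b_9, A_0, ..., A_9, B_0, ..., B_9 be real numbers and set F^+(x,y) = a_0 + a_1 x + a_2 y + a_3 x^2 + a_4 xy + a_5 y^2 + a_6 x^3 + a_7 x^2 y + a_8 x y^2 + a_9 y^3, G^+(x,y) = b_0 + b_1 x + b_2 y + b_3 x^2 + b_4 xy + b_5 y^2 + b_6 x^3 + b_7 x^2 y + b_8 x y^2 + b_9 y^3, and F^-, G^- the same expressions with A_i, B_i in place of a_i, b_i. Then for every r > 0: -∫_0^π [cos θ · F^+(r cos θ, r sin θ) + sin θ · G^+(r cos θ, r sin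 θ)] dθ - ∫_{-π}^0 [cos θ · F^-(r cos θ, r sin θ) + sin θ · G^-(r cos θ, r sin θ)] dθ = η_3 r^3 + η_2 r^2 + η_1 r + η_0, where η_3 = (π/8)(-3a_6 - a_8 - b_7 - 3b_9 - 3A_6 - A_8 - B_7 - 3B_9), η_2 = (2/3)(-a_4 - b_3 - 2b_5 + A_4 + B_3 + 2B_5), η_1 = (π/2)(-a_1 - b_2 - A_1 - B_2), η_0 = 2(B_0 - b_0). -/
open Real intervalIntegral

/-- The general cubic polynomial in two variables with coefficient tuple `c`. -/
noncomputable def cubicPoly (c : ℕ → ℝ) (x y : ℝ) : ℝ :=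
  c 0 + c 1 * x + c 2 * y + c 3 * x ^ 2 + c 4 * x * y + c 5 * y ^ 2
    + c 6 * x ^ 3 + c 7 * x ^ 2 * y + c 8 * x * y ^ 2 + c 9 * y ^ 3

/-!
Both integrands are trigonometric polynomials of degree at most four, so they have explicit
primitives, and the fundamental theorem of calculus reduces each half-circle integral to
primitive values at `0` and `±π`. There every `sin` vanishes and `cos = ±1`: what survives
are the terms linear in `θ`, coming from the monomials `cos^i θ sin^j θ` with `i, j` even
(these produce the multiples of `π`), and the odd powers of `cos θ` (these produce `η₀`
and `η₂`).
-/

section TrigPrimitives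

variable (t : ℝ)

theorem hasDerivAt_primitive_cos_sq :
    HasDerivAt (fun t => t / 2 + sin t * cos t / 2) (cos t ^ 2) t := by
  refine (((hasDerivAt_id' t).div_const 2).add
    (((hasDerivAt_sin t).mul (hasDerivAt_cos t)).div_const 2)).congr_deriv ?_
  linear_combination -sin_sq_add_cos_sq t / 2

theorem hasDerivAt_primitive_sin_sq :
    HasDerivAt (fun t => t / 2 - sin t * cos t / 2) (sin t ^ 2) t := by
  refine (((hasDerivAt_id' t).div_const 2).sub
    (((hasDerivAt_sin t).mul (hasDerivAt_cos t)).div_const 2)).congr_deriv ?_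
  linear_combination -sin_sq_add_cos_sq t / 2

theorem hasDerivAt_primitive_cos_pow_three :
    HasDerivAt (fun t => sin t - sin t ^ 3 / 3) (cos t ^ 3) t := by
  refine ((hasDerivAt_sin t).sub (((hasDerivAt_sin t).fun_pow 3).div_const 3)).congr_deriv ?_
  linear_combination -cos t * sin_sq_add_cos_sq t

theorem hasDerivAt_primitive_sin_pow_three :
    HasDerivAt (fun t => -cos t + cos t ^ 3 / 3) (sin t ^ 3) t := by
  refine ((hasDerivAt_cos t).neg.add (((hasDerivAt_cos t).fun_pow 3).div_const 3)).congr_deriv ?_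
  linear_combination -sin t * sin_sq_add_cos_sq t

theorem hasDerivAt_primitive_cos_pow_four :
    HasDerivAt (fun t => 3 * t / 8 + 3 * (sin t * cos t) / 8 + sin t * cos t ^ 3 / 4)
      (cos t ^ 4) t := by
  refine (((((hasDerivAt_id' t).const_mul 3).div_const 8).add
    ((((hasDerivAt_sin t).mul (hasDerivAt_cos t)).const_mul 3).div_const 8)).add
    (((hasDerivAt_sin t).mul ((hasDerivAt_cos t).fun_pow 3)).div_const 4)).congr_deriv ?_
  linear_combination -(3 / 8 + 3 / 4 * cos t ^ 2) * sin_sq_add_cos_sq t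

theorem hasDerivAt_primitive_sin_pow_four :
    HasDerivAt (fun t => 3 * t / 8 - 3 * (sin t * cos t) / 8 - cos t * sin t ^ 3 / 4)
      (sin t ^ 4) t := by
  refine (((((hasDerivAt_id' t).const_mul 3).div_const 8).sub
    ((((hasDerivAt_sin t).mul (hasDerivAt_cos t)).const_mul 3).div_const 8)).sub
    (((hasDerivAt_cos t).mul ((hasDerivAt_sin t).fun_pow 3)).div_const 4)).congr_deriv ?_
  linear_combination -(3 / 8 + 3 / 4 * sin t ^ 2) * sin_sq_add_cos_sq t

theorem hasDerivAt_primitive_cos_sq_mul_sin_sq :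
    HasDerivAt (fun t => t / 8 + sin t * cos t / 8 - sin t * cos t ^ 3 / 4)
      (cos t ^ 2 * sin t ^ 2) t := by
  refine ((((hasDerivAt_id' t).div_const 8).add
    (((hasDerivAt_sin t).mul (hasDerivAt_cos t)).div_const 8)).sub
    (((hasDerivAt_sin t).mul ((hasDerivAt_cos t).fun_pow 3)).div_const 4)).congr_deriv ?_
  linear_combination -(1 / 8 + cos t ^ 2 / 4) * sin_sq_add_cos_sq t

end TrigPrimitives

section CubicPrimitives

noncomputable def cosCubicPrimitive (c : ℕ → ℝ) (r t : ℝ) : ℝ :=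
  c 0 * sin t
    + c 1 * r * (t / 2 + sin t * cos t / 2)
    + c 2 * r * (sin t ^ 2 / 2)
    + c 3 * r ^ 2 * (sin t - sin t ^ 3 / 3)
    + c 4 * r ^ 2 * (-cos t ^ 3 / 3)
    + c 5 * r ^ 2 * (sin t ^ 3 / 3)
    + c 6 * r ^ 3 * (3 * t / 8 + 3 * (sin t * cos t) / 8 + sin t * cos t ^ 3 / 4)
    + c 7 * r ^ 3 * (-cos t ^ 4 / 4)
    + c 8 * r ^ 3 * (t / 8 + sin t * cos t / 8 - sin t * cos t ^ 3 / 4)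
    + c 9 * r ^ 3 * (sin t ^ 4 / 4)

noncomputable def sinCubicPrimitive (c : ℕ → ℝ) (r t : ℝ) : ℝ :=
  c 0 * -cos t
    + c 1 * r * (sin t ^ 2 / 2)
    + c 2 * r * (t / 2 - sin t * cos t / 2)
    + c 3 * r ^ 2 * (-cos t ^ 3 / 3)
    + c 4 * r ^ 2 * (sin t ^ 3 / 3)
    + c 5 * r ^ 2 * (-cos t + cos t ^ 3 / 3)
    + c 6 * r ^ 3 * (-cos t ^ 4 / 4)
    + c 7 * r ^ 3 * (t / 8 + sin t * cos t / 8 - sin t * cos t ^ 3 / 4)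
    + c 8 * r ^ 3 * (sin t ^ 4 / 4)
    + c 9 * r ^ 3 * (3 * t / 8 - 3 * (sin t * cos t) / 8 - cos t * sin t ^ 3 / 4)

variable (c : ℕ → ℝ) (r t : ℝ)

theorem hasDerivAt_cosCubicPrimitive :
    HasDerivAt (cosCubicPrimitive c r) (cos t * cubicPoly c (r * cos t) (r * sin t)) t := by
  have h := (((((((((((hasDerivAt_sin t).const_mul (c 0)).add
    ((hasDerivAt_primitive_cos_sq t).const_mul (c 1 * r))).add
    ((((hasDerivAt_sin t).fun_pow 2).div_const 2).const_mul (c 2 * r))).add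
    ((hasDerivAt_primitive_cos_pow_three t).const_mul (c 3 * r ^ 2))).add
    (((((hasDerivAt_cos t).fun_pow 3).neg).div_const 3).const_mul (c 4 * r ^ 2))).add
    ((((hasDerivAt_sin t).fun_pow 3).div_const 3).const_mul (c 5 * r ^ 2))).add
    ((hasDerivAt_primitive_cos_pow_four t).const_mul (c 6 * r ^ 3))).add
    (((((hasDerivAt_cos t).fun_pow 4).neg).div_const 4).const_mul (c 7 * r ^ 3))).add
    ((hasDerivAt_primitive_cos_sq_mul_sin_sq t).const_mul (c 8 * r ^ 3))).add
    ((((hasDerivAt_sin t).fun_pow 4).div_const 4).const_mul (c 9 * r ^ 3)))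
  refine h.congr_deriv ?_
  simp only [cubicPoly]
  ring

theorem hasDerivAt_sinCubicPrimitive :
    HasDerivAt (sinCubicPrimitive c r) (sin t * cubicPoly c (r * cos t) (r * sin t)) t := by
  have h := (((((((((((hasDerivAt_cos t).neg.const_mul (c 0)).add
    ((((hasDerivAt_sin t).fun_pow 2).div_const 2).const_mul (c 1 * r))).add
    ((hasDerivAt_primitive_sin_sq t).const_mul (c 2 * r))).add
    (((((hasDerivAt_cos t).fun_pow 3).neg).div_const 3).const_mul (c 3 * r ^ 2))).add
    ((((hasDerivAt_sin t).fun_pow 3).div_const 3).const_mul (c 4 * r ^ 2))).add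
    ((hasDerivAt_primitive_sin_pow_three t).const_mul (c 5 * r ^ 2))).add
    (((((hasDerivAt_cos t).fun_pow 4).neg).div_const 4).const_mul (c 6 * r ^ 3))).add
    ((hasDerivAt_primitive_cos_sq_mul_sin_sq t).const_mul (c 7 * r ^ 3))).add
    ((((hasDerivAt_sin t).fun_pow 4).div_const 4).const_mul (c 8 * r ^ 3))).add
    ((hasDerivAt_primitive_sin_pow_four t).const_mul (c 9 * r ^ 3)))
  refine h.congr_deriv ?_
  simp only [cubicPoly]
  ring

end CubicPrimitives

theorem integral_cos_mul_cubicPoly_add_sin_mul_cubicPoly (u v : ℕ → ℝ) (r α β : ℝ) :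
    ∫ θ in α..β, cos θ * cubicPoly u (r * cos θ) (r * sin θ)
        + sin θ * cubicPoly v (r * cos θ) (r * sin θ)
      = (cosCubicPrimitive u r β + sinCubicPrimitive v r β)
        - (cosCubicPrimitive u r α + sinCubicPrimitive v r α) := by
  refine integral_eq_sub_of_hasDerivAt
    (fun t _ => (hasDerivAt_cosCubicPrimitive u r t).add (hasDerivAt_sinCubicPrimitive v r t))
    (Continuous.intervalIntegrable ?_ α β)
  unfold cubicPoly
  fun_prop

/-- First averaged function of the discontinuous piecewise cubic perturbation of
the linear center: explicit computation of
`f₁(r) = η₃ r³ + η₂ r² + η₁ r + η₀`. -/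
theorem first_averaged_function_cubic
    (a b A B : ℕ → ℝ) :
    ∀ r : ℝ, 0 < r →
      -(∫ θ in (0:ℝ)..π,
          Real.cos θ * cubicPoly a (r * Real.cos θ) (r * Real.sin θ)
            + Real.sin θ * cubicPoly b (r * Real.cos θ) (r * Real.sin θ))
        - (∫ θ in (-π)..(0:ℝ),
          Real.cos θ * cubicPoly A (r * Real.cos θ) (r * Real.sin θ)
            + Real.sin θ * cubicPoly B (r * Real.cos θ) (r * Real.sin θ))
      = (π / 8) * (-3 * a 6 - a 8 - b 7 - 3 * b 9 - 3 * A 6 - A 8 - B 7 - 3 * B 9) * r ^ 3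
        + (2 / 3) * (-a 4 - b 3 - 2 * b 5 + A 4 + B 3 + 2 * B 5) * r ^ 2
        + (π / 2) * (-a 1 - b 2 - A 1 - B 2) * r
        + 2 * (B 0 - b 0) := by
  intro r _
  rw [integral_cos_mul_cubicPoly_add_sin_mul_cubicPoly,
    integral_cos_mul_cubicPoly_add_sin_mul_cubicPoly]
  simp only [cosCubicPrimitive, sinCubicPrimitive, sin_pi, cos_pi, sin_zero, cos_zero, sin_neg,
    cos_neg]
  ring
end

section
/- There exist real coefficients a_0,...,a_9, b_0,...,b_9, A_0,...,A_9, B_0,...,B_9 such that the function f_1(r) = -∫_0^π [cos θ · F^+(r cos θ, r sin θ) + sin θ · G^+(r cos θ, r sin θ)] dθ - ∫_{-π}^0 [cos θ · F^-(r cos θ, r sin θ) + sin θ · G^-(r cos θ, r sin θ)] dθ has exactly three zeros in (0, ∞), and each such zero r* is simple, i.e. f_1'(r*) ≠ 0. -/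
open Real intervalIntegral

/-- The first averaged function of the discontinuous piecewise cubic
perturbation of the linear center, with upper coefficients `a, b` and lower
coefficients `A, B`. -/
noncomputable def f1cubic (a b A B : ℕ → ℝ) (r : ℝ) : ℝ :=
  -(∫ θ in (0:ℝ)..π,
      Real.cos θ * cubicPoly a (r * Real.cos θ) (r * Real.sin θ)
        + Real.sin θ * cubicPoly b (r * Real.cos θ) (r * Real.sin θ))
    - (∫ θ in (-π)..(0:ℝ),
      Real.cos θ * cubicPoly A (r * Real.cos θ) (r * Real.sin θ)
        + Real.sin θ * cubicPoly B (r * Real.cos θ) (r * Real.sin θ))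

theorem mul_sub_mul_sub_mul_sub_eq_zero_iff {R : Type*} [CommRing R] [NoZeroDivisors R]
    {c p q s x : R} (hc : c ≠ 0) :
    c * ((x - p) * (x - q) * (x - s)) = 0 ↔ x = p ∨ x = q ∨ x = s := by
  simp only [mul_eq_zero, hc, sub_eq_zero, false_or, or_assoc]

theorem hasDerivAt_mul_sub_mul_sub_mul_sub {𝕜 : Type*} [NontriviallyNormedField 𝕜]
    (p q s x : 𝕜) :
    HasDerivAt (fun x => (x - p) * (x - q) * (x - s))
      ((x - q) * (x - s) + (x - p) * (x - s) + (x - p) * (x - q)) x :=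
  ((((hasDerivAt_id' x).sub_const p).fun_mul ((hasDerivAt_id' x).sub_const q)).fun_mul
    ((hasDerivAt_id' x).sub_const s)).congr_deriv (by ring)

theorem deriv_mul_sub_mul_sub_mul_sub_ne_zero {𝕜 : Type*} [NontriviallyNormedField 𝕜]
    {c p q s x : 𝕜} (hc : c ≠ 0) (hpq : p ≠ q) (hps : p ≠ s) (hqs : q ≠ s)
    (hx : x = p ∨ x = q ∨ x = s) :
    deriv (fun x => c * ((x - p) * (x - q) * (x - s))) x ≠ 0 := by
  rw [((hasDerivAt_mul_sub_mul_sub_mul_sub p q s x).const_mul c).deriv]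
  rcases hx with rfl | rfl | rfl <;>
    simp [hc, sub_eq_zero, hpq, hps, hqs, hpq.symm, hps.symm, hqs.symm]

theorem cubicPoly_zero (x y : ℝ) : cubicPoly 0 x y = 0 := by
  simp [cubicPoly]

noncomputable def threeZerosF : ℕ → ℝ
  | 1 => -22
  | 4 => 9 * π
  | 8 => -8
  | _ => 0

noncomputable def threeZerosG : ℕ → ℝ
  | 0 => 3 * π
  | _ => 0

theorem f1cubic_threeZeros (r : ℝ) :
    f1cubic threeZerosF threeZerosG 0 0 r = π * ((r - 1) * (r - 2) * (r - 3)) := by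
  have integrand : ∀ θ, cos θ * cubicPoly threeZerosF (r * cos θ) (r * sin θ)
      + sin θ * cubicPoly threeZerosG (r * cos θ) (r * sin θ)
      = -22 * r * cos θ ^ 2 + 9 * π * r ^ 2 * (sin θ * cos θ ^ 2)
        - 8 * r ^ 3 * (sin θ ^ 2 * cos θ ^ 2) + 3 * π * sin θ := by
    intro θ
    simp only [cubicPoly, threeZerosF, threeZerosG]
    ring
  have sin_four_mul_pi : sin (4 * π) = 0 := by exact_mod_cast sin_nat_mul_pi 4
  rw [f1cubic]
  simp_rw [integrand, cubicPoly_zero, mul_zero, add_zero, integral_zero, sub_zero]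
  rw [integral_add, integral_sub, integral_add, integral_const_mul, integral_const_mul,
    integral_const_mul, integral_const_mul]
  · simp only [integral_cos_sq, integral_sin_mul_cos_sq, integral_sin_sq_mul_cos_sq, integral_sin,
      sin_pi, cos_pi, mul_zero, sin_zero, cos_zero, sin_four_mul_pi]
    ring
  all_goals exact Continuous.intervalIntegrable (by fun_prop) 0 π

/-- There are discontinuous piecewise cubic perturbations of the linear center
whose first averaged function has exactly three zeros in `(0,∞)`, all simple:
this gives `L₃(1) = 3`. -/
theorem exists_f1_with_three_simple_positive_zeros :
    ∃ a b A B : ℕ → ℝ,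
      (∃ S : Finset ℝ, S.card = 3 ∧
        (∀ x : ℝ, x ∈ S ↔ (0 < x ∧ f1cubic a b A B x = 0))) ∧
      (∀ x : ℝ, 0 < x → f1cubic a b A B x = 0 → deriv (f1cubic a b A B) x ≠ 0) := by
  have hf : f1cubic threeZerosF threeZerosG 0 0 = fun r => π * ((r - 1) * (r - 2) * (r - 3)) :=
    funext f1cubic_threeZeros
  refine ⟨threeZerosF, threeZerosG, 0, 0, ⟨{1, 2, 3}, by norm_num, fun x => ?_⟩,
    fun x _ hx => ?_⟩
  · rw [hf, mul_sub_mul_sub_mul_sub_eq_zero_iff pi_ne_zero, Finset.mem_insert, Finset.mem_insert,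
      Finset.mem_singleton]
    exact ⟨fun h => ⟨by rcases h with rfl | rfl | rfl <;> norm_num, h⟩, And.right⟩
  · rw [hf] at hx ⊢
    rw [mul_sub_mul_sub_mul_sub_eq_zero_iff pi_ne_zero] at hx
    exact deriv_mul_sub_mul_sub_mul_sub_ne_zero pi_ne_zero (by norm_num) (by norm_num)
      (by norm_num) hx
end

section
/- Let ε, b_1, c_1, d_1 be real numbers with 1 - ε c_1 > 0 and ε b_1 (1 - ε c_1) > 2 ε^2 d_1^2. Then the only solution (x,y) in R^2 of the system y + ε y(-2d_1 x + b_1 y^2) = 0 and -x + ε(c_1 x + d_1 y^2) = 0 is (x,y) = (0,0). -/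
/-- Under the sign conditions `1 - εc₁ > 0` and `εb₁(1 - εc₁) > 2ε²d₁²`, the
origin is the unique singularity of the upper vector field of system (29):
`ẋ = y + εy(-2d₁x + b₁y²)`, `ẏ = -x + ε(c₁x + d₁y²)`. -/
theorem origin_unique_singularity_upper
    (ε b₁ c₁ d₁ : ℝ)
    (h₁ : 1 - ε * c₁ > 0)
    (h₂ : ε * b₁ * (1 - ε * c₁) > 2 * ε ^ 2 * d₁ ^ 2) :
    ∀ x y : ℝ,
      y + ε * y * (-2 * d₁ * x + b₁ * y ^ 2) = 0 →
      -x + ε * (c₁ * x + d₁ * y ^ 2) = 0 →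
      x = 0 ∧ y = 0 := by
  intro x y e1 e2
  have hx : x * (1 - ε * c₁) = ε * d₁ * y ^ 2 := by linear_combination -e2
  have hy : y = 0 := by
    by_contra hy
    have hy2 : y ^ 2 > 0 := by positivity
    have hfac : 1 - 2 * ε * d₁ * x + ε * b₁ * y ^ 2 = 0 := by
      rcases mul_eq_zero.mp (show y * (1 - 2 * ε * d₁ * x + ε * b₁ * y ^ 2) = 0 by
        linear_combination e1) with h | h
      · exact absurd h hy
      · exact h
    have key : (1 - ε * c₁) + y ^ 2 * (ε * b₁ * (1 - ε * c₁) - 2 * ε ^ 2 * d₁ ^ 2) = 0 := by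
      linear_combination (1 - ε * c₁) * hfac + 2 * ε * d₁ * hx
    nlinarith [mul_pos hy2 (sub_pos.mpr h₂)]
  subst hy
  refine ⟨?_, rfl⟩
  have hx0 : x * (1 - ε * c₁) = 0 := by linear_combination hx
  exact (mul_eq_zero.mp hx0).resolve_right (by linarith)
end
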